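/- arXiv:1805.08855 — 8 statements merged into one kernel-verified Lean document; each statement's English description precedes it below -/
import Mathlib

section
/- Define g(θ) = arccos( ((π − θ)cos θ + sin θ)/π ) for θ ∈ [0, π]. Then for all θ ∈ (0, π], g(θ) ≤ (1/(3π) + 1/θ)^{−1}. -/
/-!
Put `B = (1/(3π) + 1/θ)⁻¹ = 3πθ/(3π + θ)`, so `0 ≤ B ≤ θ ≤ π`. As `arccos` is antitone and
`arccos (cos B) = B`, it suffices to show `π cos B ≤ (π - θ) cos θ + sin θ`. On `[0, ∞)` the
Maclaurin partial sums of `cos` and `sin` alternately over- and underestimate, so we may replace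
`cos B` by `1 - B²/2 + B⁴/24` and `cos θ`, `sin θ` by their Taylor polynomials of degree 6 and 7.
Writing `θ = πt`, the difference of the two polynomial sides is `π³t⁴F(t, π²)/(3 + t)⁴`, where
`F(t, P)` is concave in `P` and nonnegative at `P = 0` and `P = 10` for `t ∈ [0, 1]`; note
`π² ≤ 10`.
-/

noncomputable def g (θ : ℝ) : ℝ :=
  Real.arccos (((Real.pi - θ) * Real.cos θ + Real.sin θ) / Real.pi)

open Real Finset
open scoped Nat

lemma nonneg_of_hasDerivAt_of_nonneg {f f' : ℝ → ℝ} (hf : ∀ x, HasDerivAt f (f' x) x)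
    (hf0 : f 0 = 0) (hf' : ∀ x, 0 ≤ x → 0 ≤ f' x) {x : ℝ} (hx : 0 ≤ x) : 0 ≤ f x := by
  have hmono : MonotoneOn f (Set.Ici 0) :=
    monotoneOn_of_hasDerivWithinAt_nonneg (convex_Ici 0)
      (fun y _ => (hf y).continuousAt.continuousWithinAt) (fun y _ => (hf y).hasDerivWithinAt)
      (fun y hy => hf' y (interior_subset hy))
  simpa [hf0] using hmono Set.self_mem_Ici hx hx

/- `sinTaylor n` and `cosTaylor n` are the sums of the first `n` nonzero terms of the Maclaurin
series, of degrees `2n - 1` and `2n - 2`. -/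
noncomputable def sinTaylor (n : ℕ) (x : ℝ) : ℝ :=
  ∑ k ∈ range n, (-1) ^ k * x ^ (2 * k + 1) / (2 * k + 1)!

noncomputable def cosTaylor (n : ℕ) (x : ℝ) : ℝ :=
  ∑ k ∈ range n, (-1) ^ k * x ^ (2 * k) / (2 * k)!

lemma hasDerivAt_sinTaylor (n : ℕ) (x : ℝ) : HasDerivAt (sinTaylor n) (cosTaylor n x) x := by
  unfold sinTaylor cosTaylor
  refine HasDerivAt.fun_sum fun k _ => ?_
  refine (((hasDerivAt_pow (2 * k + 1) x).const_mul ((-1 : ℝ) ^ k)).div_const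
    ((2 * k + 1)! : ℝ)).congr_deriv ?_
  rw [Nat.factorial_succ]
  push_cast
  field_simp

lemma hasDerivAt_cosTaylor_succ (n : ℕ) (x : ℝ) :
    HasDerivAt (cosTaylor (n + 1)) (-sinTaylor n x) x := by
  have hcos : cosTaylor (n + 1) =
      fun y => ∑ k ∈ range n, (-1 : ℝ) ^ (k + 1) * y ^ (2 * k + 2) / (2 * k + 2)! + 1 := by
    funext y
    simp [cosTaylor, sum_range_succ', mul_add]
  rw [hcos, sinTaylor, ← sum_neg_distrib]
  refine (HasDerivAt.fun_sum fun k _ => ?_).add_const 1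
  refine (((hasDerivAt_pow (2 * k + 2) x).const_mul ((-1 : ℝ) ^ (k + 1))).div_const
    ((2 * k + 2)! : ℝ)).congr_deriv ?_
  rw [Nat.factorial_succ]
  push_cast
  field_simp
  ring

lemma sinTaylor_bound_of_cosTaylor_bound {n : ℕ}
    (hcos : ∀ y, 0 ≤ y → 0 ≤ (-1) ^ n * (cos y - cosTaylor n y)) {x : ℝ} (hx : 0 ≤ x) :
    0 ≤ (-1) ^ n * (sin x - sinTaylor n x) :=
  nonneg_of_hasDerivAt_of_nonneg
    (fun y => ((hasDerivAt_sin y).sub (hasDerivAt_sinTaylor n y)).const_mul _)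
    (by simp [sinTaylor]) hcos hx

lemma cosTaylor_bound_of_sinTaylor_bound {n : ℕ}
    (hsin : ∀ y, 0 ≤ y → 0 ≤ (-1) ^ n * (sin y - sinTaylor n y)) {x : ℝ} (hx : 0 ≤ x) :
    0 ≤ (-1) ^ (n + 1) * (cos x - cosTaylor (n + 1) x) :=
  nonneg_of_hasDerivAt_of_nonneg
    (fun y => (((hasDerivAt_cos y).sub (hasDerivAt_cosTaylor_succ n y)).const_mul _).congr_deriv
      (by ring))
    (by simp [cosTaylor, sum_range_succ']) hsin hx

theorem cos_sin_taylor_alternating_bounds (n : ℕ) {x : ℝ} (hx : 0 ≤ x) :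
    0 ≤ (-1) ^ (n + 1) * (cos x - cosTaylor (n + 1) x) ∧
      0 ≤ (-1) ^ (n + 1) * (sin x - sinTaylor (n + 1) x) := by
  induction n generalizing x with
  | zero =>
    have hcos : ∀ y, 0 ≤ (-1) ^ 1 * (cos y - cosTaylor 1 y) := by
      simp [cosTaylor, cos_le_one]
    exact ⟨hcos x, sinTaylor_bound_of_cosTaylor_bound (fun y _ => hcos y) hx⟩
  | succ n ih =>
    have hcos : ∀ y, 0 ≤ y → 0 ≤ (-1) ^ (n + 2) * (cos y - cosTaylor (n + 2) y) :=
      fun y hy => cosTaylor_bound_of_sinTaylor_bound (fun z hz => (ih hz).2) hy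
    exact ⟨hcos x hx, sinTaylor_bound_of_cosTaylor_bound hcos hx⟩

lemma cos_le_cosTaylor (m : ℕ) {x : ℝ} (hx : 0 ≤ x) : cos x ≤ cosTaylor (2 * m + 1) x := by
  have h := (cos_sin_taylor_alternating_bounds (2 * m) hx).1
  rw [(odd_two_mul_add_one m).neg_one_pow] at h
  linarith

lemma cosTaylor_le_cos (m : ℕ) {x : ℝ} (hx : 0 ≤ x) : cosTaylor (2 * m + 2) x ≤ cos x := by
  have h := (cos_sin_taylor_alternating_bounds (2 * m + 1) hx).1
  rw [Even.neg_one_pow ⟨m + 1, by ring⟩, one_mul, sub_nonneg] at h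
  exact h

lemma sinTaylor_le_sin (m : ℕ) {x : ℝ} (hx : 0 ≤ x) : sinTaylor (2 * m + 2) x ≤ sin x := by
  have h := (cos_sin_taylor_alternating_bounds (2 * m + 1) hx).2
  rw [Even.neg_one_pow ⟨m + 1, by ring⟩, one_mul, sub_nonneg] at h
  exact h

lemma taylor_gap_poly_nonneg {t P : ℝ} (ht0 : 0 ≤ t) (ht1 : t ≤ 1) (hP0 : 0 ≤ P)
    (hP : P ≤ 10) :
    0 ≤ (27/2 + 12*t + 7/2*t^2 + t^3/3)
      + P * (9/5*t - 27/20*t^2 - 13/10*t^3 - 43/120*t^4 - t^5/30)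
      + P^2 * (-9/80*t^2 - 3/56*t^3 + 3/56*t^4 + t^5/21 + 13/1008*t^6 + t^7/840) := by
  have ht2 : t ^ 2 ≤ t := by nlinarith
  have ht3 : t ^ 3 ≤ t := by nlinarith
  have hc : -9/80*t^2 - 3/56*t^3 + 3/56*t^4 + t^5/21 + 13/1008*t^6 + t^7/840 ≤ 0 := by
    have : -9/80 - 3/56*t*(1-t) + t^3/21 + 13/1008*t^4 + t^5/840 ≤ 0 := by
      nlinarith [pow_le_one₀ ht0 ht1 (n := 3), pow_le_one₀ ht0 ht1 (n := 4),
        mul_nonneg ht0 (sub_nonneg.2 ht1)]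
    nlinarith [sq_nonneg t]
  have hend : 0 ≤ (27/2 + 12*t + 7/2*t^2 + t^3/3)
      + 10 * (9/5*t - 27/20*t^2 - 13/10*t^3 - 43/120*t^4 - t^5/30)
      + 100 * (-9/80*t^2 - 3/56*t^3 + 3/56*t^4 + t^5/21 + 13/1008*t^6 + t^7/840) := by
    nlinarith
  have hP10 : 0 ≤ 10 - P := by linarith
  -- the `P²`-coefficient is `≤ 0`, so the polynomial dominates its chord over `[0, 10]`
  nlinarith [mul_nonneg (mul_nonneg hP0 hP10) (neg_nonneg.2 hc), mul_nonneg hP0 hend,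
    mul_nonneg hP10 (by positivity : (0:ℝ) ≤ 27/2 + 12*t + 7/2*t^2 + t^3/3)]

lemma cosTaylor_harmonic_le {p t : ℝ} (hp : 0 < p) (hp10 : p ^ 2 ≤ 10) (ht0 : 0 ≤ t)
    (ht1 : t ≤ 1) :
    cosTaylor 3 (3 * p * (p * t) / (3 * p + p * t)) * p
      ≤ (p - p * t) * cosTaylor 4 (p * t) + sinTaylor 4 (p * t) := by
  have hdiff : (p - p * t) * cosTaylor 4 (p * t) + sinTaylor 4 (p * t)
      - cosTaylor 3 (3 * p * (p * t) / (3 * p + p * t)) * p =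
      p ^ 3 * t ^ 4 * ((27/2 + 12*t + 7/2*t^2 + t^3/3)
        + p^2 * (9/5*t - 27/20*t^2 - 13/10*t^3 - 43/120*t^4 - t^5/30)
        + (p^2)^2 * (-9/80*t^2 - 3/56*t^3 + 3/56*t^4 + t^5/21 + 13/1008*t^6 + t^7/840))
      / (3 + t) ^ 4 := by
    have h3t : 3 + t ≠ 0 := by positivity
    rw [show 3 * p + p * t = p * (3 + t) by ring]
    norm_num [cosTaylor, sinTaylor, sum_range_succ, Nat.factorial]
    field_simp
    ring
  have hpoly := taylor_gap_poly_nonneg ht0 ht1 (sq_nonneg p) hp10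
  rw [← sub_nonneg, hdiff]
  positivity

lemma cos_harmonic_mul_le {p θ : ℝ} (hp : 0 < p) (hp10 : p ^ 2 ≤ 10) (hθ : 0 ≤ θ)
    (hθp : θ ≤ p) : cos (3 * p * θ / (3 * p + θ)) * p ≤ (p - θ) * cos θ + sin θ := by
  obtain ⟨t, ht0, ht1, rfl⟩ : ∃ t, 0 ≤ t ∧ t ≤ 1 ∧ θ = p * t :=
    ⟨θ / p, by positivity, (div_le_one hp).2 hθp, by field_simp⟩
  calc cos (3 * p * (p * t) / (3 * p + p * t)) * p
      ≤ cosTaylor 3 (3 * p * (p * t) / (3 * p + p * t)) * p :=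
        mul_le_mul_of_nonneg_right (cos_le_cosTaylor 1 (by positivity)) hp.le
    _ ≤ (p - p * t) * cosTaylor 4 (p * t) + sinTaylor 4 (p * t) :=
        cosTaylor_harmonic_le hp hp10 ht0 ht1
    _ ≤ (p - p * t) * cos (p * t) + sin (p * t) :=
        add_le_add (mul_le_mul_of_nonneg_left (cosTaylor_le_cos 1 hθ) (by linarith))
          (sinTaylor_le_sin 1 hθ)

theorem stmt2 (θ : ℝ) (hθ : θ ∈ Set.Ioc 0 Real.pi) :
    g θ ≤ (1 / (3 * Real.pi) + 1 / θ)⁻¹ := by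
  obtain ⟨hθ0, hθπ⟩ := hθ
  have hB : (1 / (3 * π) + 1 / θ)⁻¹ = 3 * π * θ / (3 * π + θ) := by
    field_simp
    ring
  have hBθ : 3 * π * θ / (3 * π + θ) ≤ θ := by
    rw [div_le_iff₀ (by positivity)]
    nlinarith
  have hπ10 : π ^ 2 ≤ 10 := by nlinarith [pi_lt_d2, pi_pos]
  have hcos := cos_harmonic_mul_le pi_pos hπ10 hθ0.le hθπ
  rw [hB, g]
  calc arccos (((π - θ) * cos θ + sin θ) / π)
      ≤ arccos (cos (3 * π * θ / (3 * π + θ))) :=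
        arccos_le_arccos ((le_div_iff₀ pi_pos).2 hcos)
    _ = 3 * π * θ / (3 * π + θ) := arccos_cos (by positivity) (hBθ.trans hθπ)
end

section
/- Define g(θ) = arccos( ((π − θ)cos θ + sin θ)/π ) for θ ∈ [0, π]. Then for all θ ∈ (0, π], g(θ) ≥ (1/π + 1/θ)^{−1}. -/
open Real

theorem le_of_hasDerivAt_le_of_nonneg {f f' B B' : ℝ → ℝ}
    (hf : ∀ y, HasDerivAt f (f' y) y) (hB : ∀ y, HasDerivAt B (B' y) y)
    (h₀ : f 0 ≤ B 0) (hd : ∀ y, 0 ≤ y → f' y ≤ B' y) {x : ℝ} (hx : 0 ≤ x) :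
    f x ≤ B x :=
  image_le_of_deriv_right_le_deriv_boundary
    (fun y _ ↦ (hf y).continuousAt.continuousWithinAt) (fun y _ ↦ (hf y).hasDerivWithinAt) h₀
    (fun y _ ↦ (hB y).continuousAt.continuousWithinAt) (fun y _ ↦ (hB y).hasDerivWithinAt)
    (fun y hy ↦ hd y hy.1) (b := x) ⟨hx, le_rfl⟩

theorem cos_le_taylor_quartic {x : ℝ} (hx : 0 ≤ x) : cos x ≤ 1 - x ^ 2 / 2 + x ^ 4 / 24 := by
  refine le_of_hasDerivAt_le_of_nonneg (f' := fun y ↦ -sin y)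
    (B := fun y ↦ 1 - y ^ 2 / 2 + y ^ 4 / 24) (B' := fun y ↦ -y + y ^ 3 / 6)
    hasDerivAt_cos (fun y ↦ ?_) (by simp) (fun y hy ↦ ?_) hx
  · exact (((hasDerivAt_const y 1).sub ((hasDerivAt_pow 2 y).div_const 2)).add
      ((hasDerivAt_pow 4 y).div_const 24)).congr_deriv (by ring)
  · linarith [sin_ge_sub_cube hy]

theorem sin_le_taylor_quintic {x : ℝ} (hx : 0 ≤ x) :
    sin x ≤ x - x ^ 3 / 6 + x ^ 5 / 120 := by
  refine le_of_hasDerivAt_le_of_nonneg (f' := cos)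
    (B := fun y ↦ y - y ^ 3 / 6 + y ^ 5 / 120) (B' := fun y ↦ 1 - y ^ 2 / 2 + y ^ 4 / 24)
    hasDerivAt_sin (fun y ↦ ?_) (by simp) (fun y hy ↦ cos_le_taylor_quartic hy) hx
  exact (((hasDerivAt_id' y).sub ((hasDerivAt_pow 3 y).div_const 6)).add
      ((hasDerivAt_pow 5 y).div_const 120)).congr_deriv (by ring)

theorem pi_sub_mul_cos_add_sin_le_taylor {θ : ℝ} (h₀ : 0 ≤ θ) (h₁ : θ ≤ π) :
    (π - θ) * cos θ + sin θ ≤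
      π - π * θ ^ 2 / 2 + θ ^ 3 / 3 + π * θ ^ 4 / 24 - θ ^ 5 / 30 := by
  have hcos := mul_le_mul_of_nonneg_left (cos_le_taylor_quartic h₀) (sub_nonneg.2 h₁)
  linarith [sin_le_taylor_quintic h₀]

theorem quartic_nonneg {θ : ℝ} (h₀ : 0 ≤ θ) (h₁ : θ ≤ 21 / 10) :
    0 ≤ 4 / 3 * π ^ 2 - (π ^ 3 / 12 + π / 3) * θ - (π ^ 2 / 10 + 2 / 3) * θ ^ 2
      + π / 20 * θ ^ 3 + θ ^ 4 / 15 := by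
  have hl := pi_gt_d6
  have hu := pi_lt_d6
  have h2l : 9.8696 ≤ π ^ 2 := by nlinarith
  have h2u : π ^ 2 ≤ 9.8697 := by nlinarith
  have h3u : π ^ 3 ≤ 31.0063 := by nlinarith
  nlinarith [mul_nonneg h₀ (sq_nonneg θ), mul_nonneg (sq_nonneg θ) (sq_nonneg θ),
    mul_nonneg h₀ (sub_nonneg.2 h₁), mul_nonneg (sq_nonneg θ) (sub_nonneg.2 h₁),
    mul_nonneg (mul_nonneg h₀ (sq_nonneg θ)) (sub_nonneg.2 h₁)]

theorem taylor_le_pi_mul_cos {θ : ℝ} (h₀ : 0 ≤ θ) (h₁ : θ ≤ 21 / 10) :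
    π - π * θ ^ 2 / 2 + θ ^ 3 / 3 + π * θ ^ 4 / 24 - θ ^ 5 / 30 ≤
      π * cos (π * θ / (π + θ)) := by
  have hπθ : 0 < π + θ := by positivity
  have hgap : π * (1 - (π * θ / (π + θ)) ^ 2 / 2) -
      (π - π * θ ^ 2 / 2 + θ ^ 3 / 3 + π * θ ^ 4 / 24 - θ ^ 5 / 30) =
      θ ^ 3 * (4 / 3 * π ^ 2 - (π ^ 3 / 12 + π / 3) * θ - (π ^ 2 / 10 + 2 / 3) * θ ^ 2
        + π / 20 * θ ^ 3 + θ ^ 4 / 15) / (2 * (π + θ) ^ 2) := by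
    field_simp
    ring
  have hgap_nonneg : 0 ≤ θ ^ 3 * (4 / 3 * π ^ 2 - (π ^ 3 / 12 + π / 3) * θ
      - (π ^ 2 / 10 + 2 / 3) * θ ^ 2 + π / 20 * θ ^ 3 + θ ^ 4 / 15) / (2 * (π + θ) ^ 2) := by
    have := quartic_nonneg h₀ h₁
    positivity
  nlinarith [mul_le_mul_of_nonneg_left (one_sub_sq_div_two_le_cos (x := π * θ / (π + θ)))
    pi_pos.le]

theorem pi_sub_mul_cos_add_sin_le_cube {θ : ℝ} (h : θ ≤ π) :
    (π - θ) * cos θ + sin θ ≤ (π - θ) ^ 3 / 2 := by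
  have hs : 0 ≤ π - θ := sub_nonneg.2 h
  have hcos : cos θ ≤ (π - θ) ^ 2 / 2 - 1 := by
    linarith [one_sub_sq_div_two_le_cos (x := π - θ), cos_pi_sub θ]
  have hsin : sin θ ≤ π - θ := sin_pi_sub θ ▸ sin_le hs
  nlinarith [mul_le_mul_of_nonneg_left hcos hs]

theorem cube_le_pi_mul_cos {θ : ℝ} (h₀ : 21 / 10 ≤ θ) (h₁ : θ ≤ π) :
    (π - θ) ^ 3 / 2 ≤ π * cos (π * θ / (π + θ)) := by
  have hπθ : 0 < π + θ := by linarith [pi_pos]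
  have ht₀ : 0 ≤ π * θ / (π + θ) := by positivity
  have ht₁ : π * θ / (π + θ) ≤ π / 2 := by
    rw [div_le_div_iff₀ hπθ two_pos]
    nlinarith [pi_pos]
  have hchord := mul_le_mul_of_nonneg_left (one_sub_mul_le_cos ht₀ ht₁) pi_pos.le
  have hchord_eq : π * (1 - 2 / π * (π * θ / (π + θ))) = π * (π - θ) / (π + θ) := by
    field_simp
    ring
  suffices (π - θ) ^ 3 / 2 ≤ π * (π - θ) / (π + θ) by linarith
  rw [le_div_iff₀ hπθ]
  have hl := pi_gt_d6
  have hu := pi_lt_d6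
  have hs : 0 ≤ π - θ := sub_nonneg.2 h₁
  nlinarith [mul_nonneg hs hs, mul_nonneg (mul_nonneg hs hs) hs,
    mul_nonneg (mul_nonneg hs hs) (sub_nonneg.2 h₀)]

theorem pi_sub_mul_cos_add_sin_le_pi_mul_cos {θ : ℝ} (h₀ : 0 ≤ θ) (h₁ : θ ≤ π) :
    (π - θ) * cos θ + sin θ ≤ π * cos (π * θ / (π + θ)) := by
  rcases le_total θ (21 / 10) with hθ | hθ
  · exact (pi_sub_mul_cos_add_sin_le_taylor h₀ h₁).trans (taylor_le_pi_mul_cos h₀ hθ)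
  · exact (pi_sub_mul_cos_add_sin_le_cube h₁).trans (cube_le_pi_mul_cos hθ h₁)

theorem stmt3 (θ : ℝ) (hθ : θ ∈ Set.Ioc 0 Real.pi) :
    (1 / Real.pi + 1 / θ)⁻¹ ≤ g θ := by
  obtain ⟨h₀, h₁⟩ := hθ
  have hπθ : 0 < π + θ := by linarith [pi_pos]
  have ht : (1 / π + 1 / θ)⁻¹ = π * θ / (π + θ) := by
    field_simp
    ring
  have ht_le : π * θ / (π + θ) ≤ π := by
    rw [div_le_iff₀ hπθ]
    nlinarith [pi_pos]
  rw [ht, g, ← arccos_cos (by positivity) ht_le]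
  exact arccos_le_arccos
    ((div_le_iff₀' pi_pos).2 (pi_sub_mul_cos_add_sin_le_pi_mul_cos h₀.le h₁))
end

section
/- Let θ̌_0 = π and θ̌_i = g(θ̌_{i−1}) where g(θ) = arccos(((π − θ)cos θ + sin θ)/π). Then for all i ≥ 0, θ̌_i ≥ π/(i+1). -/
open Real

-- arccos is globally antitone
lemma arccos_anti {a b : ℝ} (h : a ≤ b) : Real.arccos b ≤ Real.arccos a := by
  rw [Real.arccos_eq_pi_div_two_sub_arcsin, Real.arccos_eq_pi_div_two_sub_arcsin]
  linarith [Real.monotone_arcsin h]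

-- the inner function is antitone on [0, π]
lemma c_anti : AntitoneOn (fun θ : ℝ => (Real.pi - θ) * Real.cos θ + Real.sin θ)
    (Set.Icc 0 Real.pi) := by
  apply antitoneOn_of_deriv_nonpos (convex_Icc _ _)
  · fun_prop
  · intro x _
    apply DifferentiableAt.differentiableWithinAt
    fun_prop
  · intro x hx
    rw [interior_Icc] at hx
    have hd : HasDerivAt (fun θ : ℝ => (Real.pi - θ) * Real.cos θ + Real.sin θ)
        ((0 - 1) * Real.cos x + (Real.pi - x) * (-Real.sin x) + Real.cos x) x := by
      exact (((hasDerivAt_const x Real.pi).sub (hasDerivAt_id x)).mul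
        (Real.hasDerivAt_cos x)).add (Real.hasDerivAt_sin x)
    rw [hd.deriv]
    have hs : 0 ≤ Real.sin x := Real.sin_nonneg_of_nonneg_of_le_pi hx.1.le hx.2.le
    nlinarith [hx.2]

set_option maxHeartbeats 1000000 in
-- key inequality, generic small-y case
lemma keygen {y x : ℝ} (hy0 : 0 < y) (hy1 : y ≤ Real.pi / 4) (hx : x * (Real.pi + y) = Real.pi * y) :
    (Real.pi - y) * Real.cos y + Real.sin y ≤ Real.pi * Real.cos x := by
  have hpi1 : Real.pi > 3.141592 := Real.pi_gt_d6
  have hpi2 : Real.pi < 3.141593 := Real.pi_lt_d6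
  have hy1' : y ≤ 1 := by nlinarith
  have habs : |y| ≤ 1 := by rw [abs_of_pos hy0]; exact hy1'
  have hcos := Real.cos_bound habs
  rw [abs_sub_le_iff, abs_of_pos hy0] at hcos
  have hcosy : Real.cos y ≤ 1 - y ^ 2 / 2 + y ^ 4 * (5 / 96) := by linarith [hcos.1]
  have hsiny : Real.sin y ≤ y := Real.sin_le hy0.le
  have hcx : 1 - x ^ 2 / 2 ≤ Real.cos x := Real.one_sub_sq_div_two_le_cos
  have hxval : x = Real.pi * y / (Real.pi + y) := by
    field_simp at hx ⊢; linarith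
  have hx2 : x ^ 2 * (Real.pi + y) ^ 2 = (Real.pi * y) ^ 2 := by
    rw [hxval]; field_simp
  have hden : (0:ℝ) < (Real.pi + y) ^ 2 := by positivity
  have hy4 : y < 0.786 := by nlinarith
  have hpis : Real.pi ^ 2 < 9.8697 := by nlinarith
  have hpic : Real.pi ^ 3 < 31.007 := by nlinarith [Real.pi_pos]
  -- polynomial core: 48π(2π+y) ≥ (48+5πy)(π+y)²
  have hcore : (48 + 5 * Real.pi * y) * (Real.pi + y) ^ 2 ≤ 48 * Real.pi * (2 * Real.pi + y) := by
    nlinarith [hy0.le, hy4, hpi1, hpi2, hpis, hpic, mul_pos hy0 hy0, sq_nonneg y,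
      mul_pos (mul_pos hy0 hy0) hy0]
  have hpy : 0 ≤ Real.pi - y := by nlinarith
  calc (Real.pi - y) * Real.cos y + Real.sin y
      ≤ (Real.pi - y) * (1 - y ^ 2 / 2 + y ^ 4 * (5 / 96)) + y := by nlinarith [hpy, hcosy, hsiny]
    _ ≤ Real.pi * (1 - x ^ 2 / 2) := by
        have hmul := mul_le_mul_of_nonneg_right hcore (show (0:ℝ) ≤ y ^ 3 / 96 by positivity)
        have h5 : (0:ℝ) ≤ y ^ 5 * (Real.pi + y) ^ 2 := by positivity
        have key2 : (Real.pi * (1 - x ^ 2 / 2)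
              - ((Real.pi - y) * (1 - y ^ 2 / 2 + y ^ 4 * (5 / 96)) + y)) * (Real.pi + y) ^ 2
            = (48 * Real.pi * (2 * Real.pi + y) * (y ^ 3 / 96)
                - (48 + 5 * Real.pi * y) * (Real.pi + y) ^ 2 * (y ^ 3 / 96))
              + 5 * (y ^ 5 * (Real.pi + y) ^ 2) / 96
              + (Real.pi / 2) * ((Real.pi * y) ^ 2 - x ^ 2 * (Real.pi + y) ^ 2) := by ring
        have hnn : 0 ≤ (Real.pi * (1 - x ^ 2 / 2)
            - ((Real.pi - y) * (1 - y ^ 2 / 2 + y ^ 4 * (5 / 96)) + y)) * (Real.pi + y) ^ 2 := by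
          rw [key2, hx2]; nlinarith [hmul, h5]
        nlinarith [hnn, hden]
    _ ≤ Real.pi * Real.cos x := mul_le_mul_of_nonneg_left hcx Real.pi_pos.le

-- key inequality for each n
lemma key (n : ℕ) :
    (Real.pi - Real.pi / (n + 1)) * Real.cos (Real.pi / (n + 1)) + Real.sin (Real.pi / (n + 1))
      ≤ Real.pi * Real.cos (Real.pi / (n + 2)) := by
  match n with
  | 0 =>
    norm_num [Real.cos_pi, Real.sin_pi, Real.cos_pi_div_two]
  | 1 =>
    norm_num [Real.cos_pi_div_two, Real.sin_pi_div_two, Real.cos_pi_div_three]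
    nlinarith [Real.pi_gt_three]
  | 2 =>
    norm_num [Real.cos_pi_div_three, Real.sin_pi_div_three, Real.cos_pi_div_four]
    have h2 : Real.sqrt 2 ^ 2 = 2 := Real.sq_sqrt (by norm_num)
    have h3 : Real.sqrt 3 ^ 2 = 3 := Real.sq_sqrt (by norm_num)
    have h2' : Real.sqrt 2 ≥ 1.414 := by nlinarith [Real.sqrt_nonneg 2]
    have h3' : Real.sqrt 3 ≤ 1.733 := by nlinarith [Real.sqrt_nonneg 3]
    nlinarith [Real.pi_gt_d6, Real.pi_lt_d6]
  | (m + 3) =>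
    have hn1 : (0:ℝ) < (m:ℝ) + 3 + 1 := by positivity
    have hy0 : 0 < Real.pi / ((m:ℝ) + 3 + 1) := by positivity
    have hy1 : Real.pi / ((m:ℝ) + 3 + 1) ≤ Real.pi / 4 := by
      apply div_le_div_of_nonneg_left Real.pi_pos.le (by norm_num)
      push_cast; linarith [Nat.cast_nonneg (α := ℝ) m]
    have hx : Real.pi / ((m:ℝ) + 3 + 2) * (Real.pi + Real.pi / ((m:ℝ) + 3 + 1))
        = Real.pi * (Real.pi / ((m:ℝ) + 3 + 1)) := by
      have h1 : ((m:ℝ) + 3 + 1) ≠ 0 := by positivity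
      have h2 : ((m:ℝ) + 3 + 2) ≠ 0 := by positivity
      field_simp
      ring
    have := keygen hy0 hy1 hx
    push_cast
    convert this using 3 <;> push_cast <;> ring_nf

theorem stmt5 (t : ℕ → ℝ) (h0 : t 0 = Real.pi) (hrec : ∀ i, t (i + 1) = g (t i)) :
    ∀ i : ℕ, Real.pi / ((i : ℝ) + 1) ≤ t i := by
  have htpi : ∀ i, t i ≤ Real.pi := by
    intro i
    cases i with
    | zero => rw [h0]
    | succ n => rw [hrec n]; exact Real.arccos_le_pi _
  intro i
  induction i with
  | zero => simp [h0]
  | succ n ih =>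
    have hy0 : (0:ℝ) < Real.pi / ((n:ℝ) + 1) := by positivity
    have htn0 : 0 ≤ t n := le_trans hy0.le ih
    have hmem1 : Real.pi / ((n:ℝ) + 1) ∈ Set.Icc 0 Real.pi := by
      constructor
      · positivity
      · rw [div_le_iff₀ (by positivity)]
        nlinarith [Real.pi_pos, Nat.cast_nonneg (α := ℝ) n]
    have hmem2 : t n ∈ Set.Icc 0 Real.pi := ⟨htn0, htpi n⟩
    have hanti := c_anti hmem1 hmem2 ih
    simp only at hanti
    have hkey := key n
    have hc : ((Real.pi - t n) * Real.cos (t n) + Real.sin (t n)) / Real.pi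
        ≤ Real.cos (Real.pi / ((n:ℝ) + 2)) := by
      rw [div_le_iff₀ Real.pi_pos]
      calc (Real.pi - t n) * Real.cos (t n) + Real.sin (t n)
          ≤ (Real.pi - Real.pi / ((n:ℝ)+1)) * Real.cos (Real.pi / ((n:ℝ)+1))
            + Real.sin (Real.pi / ((n:ℝ)+1)) := hanti
        _ ≤ Real.pi * Real.cos (Real.pi / ((n:ℝ) + 2)) := hkey
        _ = Real.cos (Real.pi / ((n:ℝ) + 2)) * Real.pi := by ring
    have hmem3 : (0:ℝ) ≤ Real.pi / ((n:ℝ) + 2) := by positivity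
    have hmem4 : Real.pi / ((n:ℝ) + 2) ≤ Real.pi := by
      rw [div_le_iff₀ (by positivity)]
      nlinarith [Real.pi_pos, Nat.cast_nonneg (α := ℝ) n]
    have := arccos_anti hc
    rw [Real.arccos_cos hmem3 hmem4] at this
    rw [hrec n, g]
    push_cast
    convert this using 2
    ring
end

section
/- For every θ ∈ [0, π], the derivative of g(θ) = arccos(((π − θ)cos θ + sin θ)/π) lies in the interval [0, 1]. -/
/-!
Writing `u = ((π - θ) cos θ + sin θ) / π`, the derivative of `arccos u` is `-u' / √(1 - u²)`
with `u' = -(π - θ) sin θ / π ≤ 0`, so the claim amounts to `u'² + u² ≤ 1`. Now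
`π (-u', u) = (π - θ) (sin θ, cos θ) + sin θ (0, 1)` has norm at most `(π - θ) + sin θ`,
which is `< π` because `sin θ < θ` for `θ > 0`; this also keeps `|u| < 1`, where `arccos`
is differentiable. At `θ = 0`, where `u = 1`, `g` attains its minimum `0`.
-/

open Real Set

lemma mem_Icc_of_hasDerivAt_arccos_comp {f : ℝ → ℝ} {f' x d : ℝ} (hf : HasDerivAt f f' x)
    (hf' : f' ≤ 0) (hfx : f x ^ 2 < 1) (h : f' ^ 2 + f x ^ 2 ≤ 1)
    (hd : HasDerivAt (fun y => arccos (f y)) d x) : d ∈ Icc (0 : ℝ) 1 := by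
  have hne : f x ≠ -1 ∧ f x ≠ 1 := by
    constructor <;> rintro hfx1 <;> simp [hfx1] at hfx
  have hchain := (hasDerivAt_arccos hne.1 hne.2).comp x hf
  obtain rfl : d = -f' / √(1 - f x ^ 2) := by
    rw [hd.unique hchain]
    ring
  have hf'_le : -f' ≤ √(1 - f x ^ 2) :=
    (le_sqrt (by linarith) (by linarith)).2 (by rw [neg_sq]; linarith)
  exact ⟨div_nonneg (by linarith) (sqrt_nonneg _), div_le_one_of_le₀ hf'_le (sqrt_nonneg _)⟩

lemma hasDerivAt_sub_mul_cos_add_sin (p x : ℝ) :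
    HasDerivAt (fun y => (p - y) * cos y + sin y) (-((p - x) * sin x)) x := by
  have := (((hasDerivAt_id x).const_sub p).mul (hasDerivAt_cos x)).add (hasDerivAt_sin x)
  exact this.congr_deriv (by simp only [id_eq]; ring)

lemma sq_add_sq_le_sq_add_sin {a x : ℝ} (h : 0 ≤ a * sin x) :
    (a * sin x) ^ 2 + (a * cos x + sin x) ^ 2 ≤ (a + sin x) ^ 2 := by
  nlinarith [sin_sq_add_cos_sq x, mul_nonneg h (sub_nonneg.2 (cos_le_one x))]

lemma sq_add_sq_lt_pi_sq {θ : ℝ} (hθ : θ ∈ Ioc 0 π) :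
    ((π - θ) * sin θ) ^ 2 + ((π - θ) * cos θ + sin θ) ^ 2 < π ^ 2 := by
  obtain ⟨h0, hπ⟩ := hθ
  have hsin : 0 ≤ sin θ := sin_nonneg_of_nonneg_of_le_pi h0.le hπ
  calc _ ≤ (π - θ + sin θ) ^ 2 := sq_add_sq_le_sq_add_sin (mul_nonneg (by linarith) hsin)
    _ < π ^ 2 := by
      have := sin_lt h0
      gcongr
      linarith

theorem stmt6 (θ : ℝ) (hθ : θ ∈ Set.Icc 0 Real.pi) (d : ℝ) (hd : HasDerivAt g d θ) :
    d ∈ Set.Icc (0 : ℝ) 1 := by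
  rcases hθ.1.eq_or_lt with rfl | h0
  · have hmin : IsLocalMin g 0 := Filter.Eventually.of_forall fun x => by
      simp only [g, sub_zero, cos_zero, mul_one, sin_zero, add_zero, div_self pi_ne_zero,
        arccos_one]
      exact arccos_nonneg _
    simp [hmin.hasDerivAt_eq_zero hd]
  · obtain ⟨hθ0, hθπ⟩ := hθ
    have hsq : (-((π - θ) * sin θ) / π) ^ 2 + (((π - θ) * cos θ + sin θ) / π) ^ 2 < 1 := by
      rw [div_pow, div_pow, neg_sq, ← add_div, div_lt_one (by positivity)]
      exact sq_add_sq_lt_pi_sq ⟨h0, hθπ⟩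
    have hsin := sin_nonneg_of_nonneg_of_le_pi hθ0 hθπ
    have hf' : -((π - θ) * sin θ) / π ≤ 0 :=
      div_nonpos_of_nonpos_of_nonneg (neg_nonpos.2 (mul_nonneg (by linarith) hsin)) pi_pos.le
    exact mem_Icc_of_hasDerivAt_arccos_comp ((hasDerivAt_sub_mul_cos_add_sin π θ).div_const π) hf'
      (by nlinarith) hsq.le hd
end

section
/- Let θ̄_0 ∈ [0,π] and θ̄_i = g(θ̄_{i−1}) with g(θ) = arccos(((π−θ)cosθ+sinθ)/π). Then the product ∏_{i=0}^{d−1} (π − θ̄_i)/π is at least ((π − θ̄_0)/π) · d^{−3}. -/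
open Real Set Finset

noncomputable def gArg (θ : ℝ) : ℝ := ((π - θ) * cos θ + sin θ) / π

lemma gArg_eq_cos_add (θ : ℝ) : gArg θ = cos θ + (sin θ - θ * cos θ) / π := by
  unfold gArg; field_simp; ring

lemma Real.cos_le_one_sub_sq_div_two_add (x : ℝ) : cos x ≤ 1 - x ^ 2 / 2 + x ^ 4 / 24 := by
  wlog hx : 0 ≤ x generalizing x
  · have := this (-x) (by linarith)
    rwa [cos_neg, even_two.neg_pow, (show Even 4 by decide).neg_pow] at this
  have hmono : MonotoneOn (fun y : ℝ => 1 - y ^ 2 / 2 + y ^ 4 / 24 - cos y) (Ici 0) := by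
    refine monotoneOn_of_deriv_nonneg (convex_Ici 0) (by fun_prop) (by fun_prop) fun y hy => ?_
    rw [interior_Ici] at hy
    have hderiv : HasDerivAt (fun y : ℝ => 1 - y ^ 2 / 2 + y ^ 4 / 24 - cos y)
        (sin y - (y - y ^ 3 / 6)) y := by
      refine ((((hasDerivAt_const y (1 : ℝ)).sub ((hasDerivAt_pow 2 y).div_const 2)).add
        ((hasDerivAt_pow 4 y).div_const 24)).sub (hasDerivAt_cos y)).congr_deriv ?_
      norm_num
      ring
    rw [hderiv.deriv]
    linarith [sin_ge_sub_cube (le_of_lt hy)]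
  simpa using hmono self_mem_Ici (mem_Ici.2 hx) hx

lemma antitoneOn_gArg : AntitoneOn gArg (Icc 0 π) := by
  refine fun a ha b hb hab => div_le_div_of_nonneg_right ?_ pi_pos.le
  refine antitoneOn_of_deriv_nonpos (f := fun θ : ℝ => (π - θ) * cos θ + sin θ)
    (convex_Icc 0 π) (by fun_prop) (by fun_prop) (fun y hy => ?_) ha hb hab
  rw [interior_Icc] at hy
  have hderiv : HasDerivAt (fun θ : ℝ => (π - θ) * cos θ + sin θ) (-((π - y) * sin y)) y := by
    refine ((((hasDerivAt_const y π).sub (hasDerivAt_id y)).mul (hasDerivAt_cos y)).add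
      (hasDerivAt_sin y)).congr_deriv ?_
    simp only [Pi.sub_apply, id]
    ring
  rw [hderiv.deriv, neg_nonpos]
  exact mul_nonneg (by linarith [hy.2]) (sin_nonneg_of_nonneg_of_le_pi hy.1.le hy.2.le)

lemma gArg_nonneg {θ : ℝ} (hθ : θ ∈ Icc 0 π) : 0 ≤ gArg θ := by
  have := antitoneOn_gArg hθ (right_mem_Icc.2 pi_pos.le) hθ.2
  simpa [gArg] using this

lemma Real.cos_sub_cos_le_sin_mul {a b : ℝ} (ha : 0 ≤ a) (hab : a ≤ b) (hb : b ≤ π / 2) :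
    cos a - cos b ≤ sin b * (b - a) := by
  have hmid : sin ((a + b) / 2) ≤ sin b :=
    sin_le_sin_of_le_of_le_pi_div_two (by linarith [pi_pos]) hb (by linarith)
  have hhalf : sin ((b - a) / 2) ≤ (b - a) / 2 := sin_le (by linarith)
  have hhalf_nonneg : 0 ≤ sin ((b - a) / 2) :=
    sin_nonneg_of_nonneg_of_le_pi (by linarith) (by linarith [pi_pos])
  have hsin_nonneg : 0 ≤ sin b := sin_nonneg_of_nonneg_of_le_pi (by linarith) (by linarith)
  calc cos a - cos b = 2 * (sin ((a + b) / 2) * sin ((b - a) / 2)) := by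
        rw [cos_sub_cos, ← neg_sub b a, neg_div, sin_neg]; ring
    _ ≤ 2 * (sin b * ((b - a) / 2)) := by gcongr
    _ = sin b * (b - a) := by ring

lemma pi_mul_sq_mul_sin_le {s : ℝ} (hs : 0 ≤ s) (hs' : s ≤ π / 2) :
    π * s ^ 2 * sin s ≤ (3 * π + s) * (sin s - s * cos s) := by
  have hpi := pi_gt_three
  have hpi' := pi_lt_d2
  have hcoef : 0 ≤ 3 * π + s - π * s ^ 2 := by
    have : s ^ 2 ≤ (π / 2) ^ 2 := by gcongr
    nlinarith
  suffices s * cos s * (3 * π + s) ≤ sin s * (3 * π + s - π * s ^ 2) by linarith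
  calc s * cos s * (3 * π + s)
      ≤ s * (1 - s ^ 2 / 2 + s ^ 4 / 24) * (3 * π + s) := by
        gcongr; exact cos_le_one_sub_sq_div_two_add s
    _ ≤ (s - s ^ 3 / 6) * (3 * π + s - π * s ^ 2) := by
        nlinarith [pow_nonneg hs 4, mul_nonneg (pow_nonneg hs 5) (by linarith : 0 ≤ π - s)]
    _ ≤ sin s * (3 * π + s - π * s ^ 2) := by gcongr; exact sin_ge_sub_cube hs

/-- `s ↦ 3πs/(3π+s)` maps `3π/(k+3)` to `3π/(k+4)`. -/
lemma cos_le_gArg {s : ℝ} (hs : 0 ≤ s) (hs' : s ≤ π / 2) :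
    cos (3 * π * s / (3 * π + s)) ≤ gArg s := by
  have hden : 0 < 3 * π + s := by linarith [pi_pos]
  have hgap : s - 3 * π * s / (3 * π + s) = s ^ 2 / (3 * π + s) := by
    field_simp; ring
  have hle : 3 * π * s / (3 * π + s) ≤ s := by linarith [div_nonneg (sq_nonneg s) hden.le]
  have hcos := cos_sub_cos_le_sin_mul (by positivity) hle hs'
  have hkey : sin s * (s ^ 2 / (3 * π + s)) ≤ (sin s - s * cos s) / π := by
    rw [mul_div_assoc', div_le_div_iff₀ hden pi_pos]
    linarith [pi_mul_sq_mul_sin_le hs hs']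
  rw [hgap] at hcos
  rw [gArg_eq_cos_add]
  linarith

lemma cos_le_gArg_three_pi_div (k : ℕ) :
    cos (3 * π / (k + 4)) ≤ gArg (3 * π / (k + 3)) := by
  rcases lt_or_ge k 3 with hk | hk
  · have hk' : (k : ℝ) ≤ 2 := by exact_mod_cast Nat.lt_succ_iff.1 hk
    refine (cos_nonpos_of_pi_div_two_le_of_le ?_ ?_).trans (gArg_nonneg ⟨by positivity, ?_⟩)
    · rw [le_div_iff₀ (by positivity)]; nlinarith [pi_pos]
    · rw [div_le_iff₀ (by positivity)]; nlinarith [pi_pos, k.cast_nonneg (α := ℝ)]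
    · rw [div_le_iff₀ (by positivity)]; nlinarith [pi_pos, k.cast_nonneg (α := ℝ)]
  · have hk' : (3 : ℝ) ≤ k := by exact_mod_cast hk
    convert cos_le_gArg (s := 3 * π / (k + 3)) (by positivity) ?_ using 2
    · field_simp; ring
    · rw [div_le_div_iff₀ (by positivity) two_pos]; nlinarith [pi_pos]

lemma g_le_three_pi_div (k : ℕ) {θ : ℝ} (hθ : θ ∈ Icc 0 (3 * π / (k + 3))) :
    g θ ≤ 3 * π / (k + 4) := by
  have hk : (0 : ℝ) ≤ k := k.cast_nonneg
  have hθπ : θ ∈ Icc 0 π :=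
    ⟨hθ.1, hθ.2.trans ((div_le_iff₀ (by positivity)).2 (by nlinarith [pi_pos]))⟩
  have hcos : cos (3 * π / (k + 4)) ≤ gArg θ :=
    (cos_le_gArg_three_pi_div k).trans (antitoneOn_gArg hθπ ⟨hθπ.1.trans hθ.2, by
      rw [div_le_iff₀ (by positivity)]; nlinarith [pi_pos]⟩ hθ.2)
  calc g θ ≤ arccos (cos (3 * π / (k + 4))) := arccos_le_arccos hcos
    _ = 3 * π / (k + 4) := arccos_cos (by positivity)
        ((div_le_iff₀ (by positivity)).2 (by nlinarith [pi_pos]))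

lemma orbit_mem_Icc_three_pi_div {t : ℕ → ℝ} (h0 : t 0 ∈ Icc 0 π)
    (hrec : ∀ i, t (i + 1) = g (t i)) (i : ℕ) : t i ∈ Icc 0 (3 * π / (i + 3)) := by
  induction i with
  | zero => simpa [mul_div_cancel_left₀] using h0
  | succ i ih =>
    rw [hrec, Nat.cast_succ, add_assoc, show (1 : ℝ) + 3 = 4 by norm_num]
    exact ⟨arccos_nonneg _, g_le_three_pi_div i ih⟩

lemma prod_range_one_sub_three_div (n : ℕ) :
    ∏ i ∈ range n, (1 - 3 / ((i : ℝ) + 4)) = 6 / ((n + 1) * (n + 2) * (n + 3)) := by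
  induction n with
  | zero => norm_num
  | succ n ih =>
    rw [prod_range_succ, ih]
    push_cast
    field_simp
    ring

lemma inv_pow_three_le_prod (n : ℕ) :
    (((n : ℝ) + 1) ^ 3)⁻¹ ≤ ∏ i ∈ range n, (1 - 3 / ((i : ℝ) + 4)) := by
  rw [prod_range_one_sub_three_div, inv_eq_one_div,
    div_le_div_iff₀ (by positivity) (by positivity)]
  have hn : (0 : ℝ) ≤ n := n.cast_nonneg
  nlinarith [mul_nonneg (mul_nonneg hn hn) hn, mul_nonneg hn hn]

lemma one_sub_three_div_le_sub_div_pi {x θ : ℝ} (hx : 0 < x) (hθ : θ ≤ 3 * π / x) :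
    1 - 3 / x ≤ (π - θ) / π := by
  rw [le_div_iff₀ hx] at hθ
  rw [sub_div, div_self pi_ne_zero, sub_le_sub_iff_left, div_le_div_iff₀ pi_pos hx]
  exact hθ

theorem stmt7_general (t : ℕ → ℝ) (h0 : t 0 ∈ Set.Icc 0 Real.pi)
    (hrec : ∀ i, t (i + 1) = g (t i)) (d : ℕ) :
    (Real.pi - t 0) / Real.pi * ((d : ℝ) ^ 3)⁻¹ ≤
      ∏ i ∈ Finset.range d, (Real.pi - t i) / Real.pi := by
  cases d with
  | zero => simp
  | succ n =>
    have hbound := orbit_mem_Icc_three_pi_div h0 hrec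
    rw [prod_range_succ', mul_comm, Nat.cast_succ]
    gcongr
    · exact div_nonneg (sub_nonneg.2 h0.2) pi_pos.le
    calc (((n : ℝ) + 1) ^ 3)⁻¹
        ≤ ∏ i ∈ range n, (1 - 3 / ((i : ℝ) + 4)) := inv_pow_three_le_prod n
      _ ≤ ∏ i ∈ range n, (π - t (i + 1)) / π := by
        refine prod_le_prod (fun i _ => ?_)
          (fun i _ => one_sub_three_div_le_sub_div_pi (by positivity) ?_)
        · rw [sub_nonneg, div_le_one (by positivity)]; linarith [i.cast_nonneg (α := ℝ)]
        · simpa [add_assoc, show (1 : ℝ) + 3 = 4 by norm_num] using (hbound (i + 1)).2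

theorem stmt7 (t : ℕ → ℝ) (h0 : t 0 ∈ Set.Icc 0 Real.pi)
    (hrec : ∀ i, t (i + 1) = g (t i)) (d : ℕ) (hd : 1 ≤ d) :
    (Real.pi - t 0) / Real.pi * ((d : ℝ) ^ 3)⁻¹ ≤
      ∏ i ∈ Finset.range d, (Real.pi - t i) / Real.pi :=
  stmt7_general t h0 hrec d
end

section
/- Define ρ_d = Σ_{i=0}^{d−1} (sin θ̌_i / π) · ∏_{j=i+1}^{d−1} (π − θ̌_j)/π, where θ̌_0 = π and θ̌_i = g(θ̌_{i−1}) with g(θ) = arccos(((π−θ)cosθ+sinθ)/π). Then ρ_d → 1 as d → ∞. -/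
/-!
With `x j = θ̌ j / π` and `x 0 = 1`, the identity
`∑ i < d, x i * ∏ i < j < d, (1 - x j) = 1 - ∏ j < d, (1 - x j) = 1` turns `1 - ρ_d` into
`∑ i < d, (θ̌ i - sin θ̌ i) / π * ∏ i < j < d, (1 - θ̌ j / π)`, a sum of nonnegative terms.

On `(0, π/2]` the map `g` satisfies `1/θ + 1/(6π) ≤ 1/g θ ≤ 1/θ + 1/π`: write
`cos (g θ) = cos θ + (sin θ - θ cos θ) / π`, bound `sin θ - θ cos θ` between `θ² sin θ / 6` and
`θ³ / 3`, and compare with a tangent line of `cos`. Hence `π/(i+1) ≤ θ̌ i ≤ 6π/(i+1)`, so each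
product telescopes to at most `(i+1)/d` and `θ̌ i - sin θ̌ i ≤ θ̌ i ^ 3 / 6 = O(i⁻³)`, giving
`0 ≤ 1 - ρ_d ≤ 72 π² / d`.
-/

open Real Finset Filter Topology

lemma monotoneOn_Icc_of_hasDerivAt_nonneg {f f' : ℝ → ℝ} {a b : ℝ}
    (hf : ∀ x, HasDerivAt f (f' x) x) (hf' : ∀ x ∈ Set.Ioo a b, 0 ≤ f' x) :
    MonotoneOn f (Set.Icc a b) :=
  monotoneOn_of_hasDerivWithinAt_nonneg (convex_Icc a b)
    (continuous_iff_continuousAt.2 fun x => (hf x).continuousAt).continuousOn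
    (fun x _ => (hf x).hasDerivWithinAt) (by simpa only [interior_Icc] using hf')

lemma hasDerivAt_sin_sub_mul_cos (x : ℝ) :
    HasDerivAt (fun x => sin x - x * cos x) (x * sin x) x :=
  ((hasDerivAt_sin x).sub ((hasDerivAt_id x).mul (hasDerivAt_cos x))).congr_deriv
    (by simp only [id]; ring)

lemma sin_sub_mul_cos_nonneg {x : ℝ} (hx₀ : 0 ≤ x) (hx : x ≤ π) : 0 ≤ sin x - x * cos x := by
  have hmono := monotoneOn_Icc_of_hasDerivAt_nonneg hasDerivAt_sin_sub_mul_cos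
    fun y hy => mul_nonneg hy.1.le (sin_nonneg_of_nonneg_of_le_pi hy.1.le hy.2.le)
  simpa using hmono (Set.left_mem_Icc.2 pi_nonneg) ⟨hx₀, hx⟩ hx₀

lemma sin_sub_mul_cos_le {x : ℝ} (hx₀ : 0 ≤ x) : sin x - x * cos x ≤ x ^ 3 / 3 := by
  have hd (y : ℝ) :
      HasDerivAt (fun y => y ^ 3 / 3 - (sin y - y * cos y)) (y * (y - sin y)) y :=
    (((hasDerivAt_pow 3 y).div_const 3).sub (hasDerivAt_sin_sub_mul_cos y)).congr_deriv
      (by ring)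
  have hmono := monotoneOn_Icc_of_hasDerivAt_nonneg (b := x) hd
    fun y hy => mul_nonneg hy.1.le (sub_nonneg.2 (sin_le hy.1.le))
  have := hmono (Set.left_mem_Icc.2 hx₀) (Set.right_mem_Icc.2 hx₀) hx₀
  simp only [ne_eq, OfNat.ofNat_ne_zero, not_false_eq_true, zero_pow, zero_div, sin_zero,
    zero_mul, sub_self] at this
  linarith

lemma sq_mul_sin_div_six_le_sin_sub_mul_cos {x : ℝ} (hx₀ : 0 ≤ x) (hx : x ≤ π) :
    x ^ 2 * sin x / 6 ≤ sin x - x * cos x := by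
  have hd (y : ℝ) : HasDerivAt (fun y => sin y - y * cos y - y ^ 2 * sin y / 6)
      (y / 6 * (4 * sin y - y * cos y)) y :=
    ((hasDerivAt_sin_sub_mul_cos y).sub
      (((hasDerivAt_pow 2 y).mul (hasDerivAt_sin y)).div_const 6)).congr_deriv (by ring)
  have hmono := monotoneOn_Icc_of_hasDerivAt_nonneg hd fun y hy => by
    have hsin := sin_nonneg_of_nonneg_of_le_pi hy.1.le hy.2.le
    have := sin_sub_mul_cos_nonneg hy.1.le hy.2.le
    exact mul_nonneg (by linarith [hy.1]) (by linarith)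
  have := hmono (Set.left_mem_Icc.2 pi_nonneg) ⟨hx₀, hx⟩ hx₀
  simp only [sin_zero, zero_mul, sub_self, ne_eq, OfNat.ofNat_ne_zero, not_false_eq_true,
    zero_pow, zero_div] at this
  linarith

lemma cos_le_cos_sub_mul_sin {x y : ℝ} (hx : x ∈ Set.Icc (-(π / 2)) (π / 2))
    (hy : y ∈ Set.Icc (-(π / 2)) (π / 2)) : cos y ≤ cos x - (y - x) * sin x := by
  have hcc := strictConcaveOn_cos_Icc.concaveOn
  rcases lt_trichotomy x y with hxy | rfl | hxy
  · have := hcc.slope_le_of_hasDerivAt hx hy hxy (hasDerivAt_cos x)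
    rw [slope_def_field, div_le_iff₀ (sub_pos.2 hxy)] at this
    linarith
  · simp
  · have := hcc.le_slope_of_hasDerivAt hy hx hxy (hasDerivAt_cos x)
    rw [slope_def_field, le_div_iff₀ (sub_pos.2 hxy)] at this
    linarith

lemma mul_div_add_le_mul_div_add {c x y : ℝ} (hc : 0 < c) (hx : 0 ≤ x) (hxy : x ≤ y) :
    c * x / (c + x) ≤ c * y / (c + y) := by
  rw [div_le_div_iff₀ (by linarith) (by linarith)]
  nlinarith [mul_nonneg (mul_nonneg hc.le hc.le) (sub_nonneg.2 hxy)]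

lemma mul_div_div_add_div_eq (c a : ℝ) (hc : c ≠ 0) (ha : 0 < a) :
    c * (c / a) / (c + c / a) = c / (a + 1) := by
  field_simp

lemma g_eq_arccos (θ : ℝ) : g θ = arccos (cos θ + (sin θ - θ * cos θ) / π) := by
  rw [g]
  congr 1
  field_simp
  ring

lemma g_pi : g π = π / 2 := by simp [g]

lemma g_le_pi_div_two {θ : ℝ} (h₀ : 0 ≤ θ) (hπ : θ ≤ π) : g θ ≤ π / 2 := by
  have := sin_sub_mul_cos_nonneg (x := π - θ) (by linarith) (by linarith)
  rw [sin_pi_sub, cos_pi_sub] at this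
  exact arccos_le_pi_div_two.2 (div_nonneg (by linarith) pi_nonneg)

lemma g_le_mul_div_add {θ : ℝ} (h₀ : 0 ≤ θ) (h : θ ≤ π / 2) :
    g θ ≤ 6 * π * θ / (6 * π + θ) := by
  set y := 6 * π * θ / (6 * π + θ)
  have hpos : 0 < 6 * π + θ := by positivity
  have hθy : θ - y = θ ^ 2 / (6 * π + θ) := by simp only [y]; field_simp; ring
  have hy₀ : 0 ≤ y := by positivity
  have hyθ : y ≤ θ := by nlinarith [div_nonneg (sq_nonneg θ) hpos.le]
  rw [g_eq_arccos, ← arccos_cos hy₀ (by linarith [pi_pos])]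
  refine arccos_le_arccos ?_
  have htan := cos_le_cos_sub_mul_sin (x := θ) (y := y) ⟨by linarith [pi_pos], h⟩
    ⟨by linarith [pi_pos], by linarith⟩
  have hsin := sin_nonneg_of_nonneg_of_le_pi h₀ (by linarith [pi_pos])
  have hφ := sq_mul_sin_div_six_le_sin_sub_mul_cos h₀ (by linarith [pi_pos])
  have : (θ - y) * sin θ ≤ (sin θ - θ * cos θ) / π := by
    rw [hθy, le_div_iff₀ pi_pos]
    calc θ ^ 2 / (6 * π + θ) * sin θ * π ≤ θ ^ 2 / (6 * π) * sin θ * π := by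
          gcongr; linarith
      _ = θ ^ 2 * sin θ / 6 := by field_simp
      _ ≤ _ := hφ
  linarith

lemma mul_div_add_le_g {θ : ℝ} (h₀ : 0 ≤ θ) (h : θ ≤ π / 2) :
    π * θ / (π + θ) ≤ g θ := by
  set s := π * θ / (π + θ)
  have hpos : 0 < π + θ := by positivity
  have hs₀ : 0 ≤ s := by positivity
  have hs : s ≤ π / 3 := by
    rw [div_le_div_iff₀ hpos (by norm_num)]; nlinarith [pi_pos]
  have hsθ : s ≤ θ := by rw [div_le_iff₀ hpos]; nlinarith
  have hθs : (θ - s) * s = π * θ ^ 3 / (π + θ) ^ 2 := by simp only [s]; field_simp; ring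
  rw [g_eq_arccos, ← arccos_cos hs₀ (by linarith [pi_pos])]
  refine arccos_le_arccos ?_
  have htan := cos_le_cos_sub_mul_sin (x := s) (y := θ) ⟨by linarith [pi_pos], by linarith⟩
    ⟨by linarith [pi_pos], h⟩
  have hs2 : s ^ 2 ≤ 3 / 2 := by nlinarith [pi_lt_d2]
  have hsin : 3 / 4 * s ≤ sin s := by
    nlinarith [sin_ge_sub_cube hs₀, mul_le_mul_of_nonneg_left hs2 hs₀]
  have : θ ^ 3 / 3 / π ≤ (θ - s) * sin s := by
    calc θ ^ 3 / 3 / π ≤ 3 / 4 * ((θ - s) * s) := by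
          have h1 : (π + θ) ^ 2 ≤ 9 / 4 * π ^ 2 := by nlinarith
          rw [hθs, div_div, mul_div_assoc', div_le_div_iff₀ (by positivity) (by positivity)]
          nlinarith [mul_le_mul_of_nonneg_left h1 (pow_nonneg h₀ 3), pi_pos]
      _ ≤ (θ - s) * sin s := by nlinarith
  have : (sin θ - θ * cos θ) / π ≤ θ ^ 3 / 3 / π := by gcongr; exact sin_sub_mul_cos_le h₀
  linarith

lemma sum_mul_prod_Ico_one_sub {R : Type*} [CommRing R] (x : ℕ → R) (d : ℕ) :
    ∑ i ∈ range d, x i * ∏ j ∈ Ico (i + 1) d, (1 - x j) = 1 - ∏ j ∈ range d, (1 - x j) := by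
  have h := prod_add_ordered (range d) (fun j => 1 - x j) x
  simp only [sub_add_cancel, prod_const_one, mul_one] at h
  have hIco : ∀ i, Ico (i + 1) d = {j ∈ range d | i < j} := fun i => by
    ext j; simp only [mem_filter, mem_range, mem_Ico]; omega
  simp only [hIco]
  linear_combination -h

lemma prod_Ico_div_add_one {a d : ℕ} (ha : 0 < a) (had : a ≤ d) :
    ∏ j ∈ Ico a d, (j : ℝ) / (j + 1) = a / d := by
  induction d, had using Nat.le_induction with
  | base => simp [div_self (Nat.cast_ne_zero.2 ha.ne' : (a : ℝ) ≠ 0)]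
  | succ d had ih =>
    have : (d : ℝ) ≠ 0 := Nat.cast_ne_zero.2 (ha.trans_le had).ne'
    rw [prod_Ico_succ_top had, ih]
    field_simp
    push_cast
    ring

lemma sum_range_inv_add_one_sq_le (d : ℕ) : ∑ i ∈ range d, ((i + 1 : ℝ) ^ 2)⁻¹ ≤ 2 := by
  have := sum_Ioo_inv_sq_le (α := ℝ) 0 (d + 1)
  rw [← Finset.Ico_add_one_left_eq_Ioo, ← sum_Ico_add', Nat.Ico_zero_eq_range] at this
  simpa using this

noncomputable def rho (t : ℕ → ℝ) (d : ℕ) : ℝ :=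
  ∑ i ∈ range d, sin (t i) / π * ∏ j ∈ Ico (i + 1) d, (π - t j) / π

lemma one_sub_rho_eq {t : ℕ → ℝ} (h0 : t 0 = π) {d : ℕ} (hd : 1 ≤ d) :
    1 - rho t d =
      ∑ i ∈ range d, (t i - sin (t i)) / π * ∏ j ∈ Ico (i + 1) d, (π - t j) / π := by
  have hfac (j : ℕ) : (π - t j) / π = 1 - t j / π := by rw [sub_div, div_self pi_ne_zero]
  have hsum := sum_mul_prod_Ico_one_sub (fun j => t j / π) d
  rw [prod_eq_zero (mem_range.2 hd) (by simp [h0, pi_ne_zero]), sub_zero] at hsum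
  rw [← hsum]
  simp only [rho, hfac, ← sum_sub_distrib]
  refine sum_congr rfl fun i _ => ?_
  ring

lemma prod_Ico_pi_sub_div_le {t : ℕ → ℝ} (hlow : ∀ j, π / (j + 1) ≤ t j)
    (hup : ∀ j, t j ≤ π) {i d : ℕ} (hid : i < d) :
    ∏ j ∈ Ico (i + 1) d, (π - t j) / π ≤ (i + 1) / d := by
  calc ∏ j ∈ Ico (i + 1) d, (π - t j) / π ≤ ∏ j ∈ Ico (i + 1) d, (j : ℝ) / (j + 1) := by
        refine prod_le_prod (fun j _ => div_nonneg (sub_nonneg.2 (hup j)) pi_nonneg)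
          fun j _ => ?_
        have := hlow j
        rw [div_le_div_iff₀ pi_pos (by positivity)]
        rw [div_le_iff₀ (by positivity)] at this
        linarith
    _ = (i + 1) / d := by rw [prod_Ico_div_add_one i.succ_pos hid]; push_cast; rfl

section Orbit

variable {t : ℕ → ℝ}

lemma orbit_nonneg (h0 : t 0 = π) (hrec : ∀ i, t (i + 1) = g (t i)) : ∀ i, 0 ≤ t i
  | 0 => h0 ▸ pi_nonneg
  | i + 1 => hrec i ▸ arccos_nonneg _

lemma orbit_le_pi (h0 : t 0 = π) (hrec : ∀ i, t (i + 1) = g (t i)) : ∀ i, t i ≤ π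
  | 0 => h0.le
  | i + 1 => hrec i ▸ arccos_le_pi _

lemma orbit_succ_le_pi_div_two (h0 : t 0 = π) (hrec : ∀ i, t (i + 1) = g (t i)) (i : ℕ) :
    t (i + 1) ≤ π / 2 :=
  hrec i ▸ g_le_pi_div_two (orbit_nonneg h0 hrec i) (orbit_le_pi h0 hrec i)

lemma pi_div_le_orbit (h0 : t 0 = π) (hrec : ∀ i, t (i + 1) = g (t i)) :
    ∀ i : ℕ, π / (i + 1) ≤ t i
  | 0 => by simp [h0]
  | 1 => by rw [hrec, h0, g_pi]; norm_num
  | i + 2 => by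
    have ih := pi_div_le_orbit h0 hrec (i + 1)
    calc π / ((i + 2 : ℕ) + 1 : ℝ)
        = π * (π / ((i + 1 : ℕ) + 1)) / (π + π / ((i + 1 : ℕ) + 1)) := by
          rw [mul_div_div_add_div_eq _ _ pi_ne_zero (by positivity)]; push_cast; ring_nf
      _ ≤ π * t (i + 1) / (π + t (i + 1)) :=
          mul_div_add_le_mul_div_add pi_pos (by positivity) ih
      _ ≤ t (i + 2) := hrec (i + 1) ▸
          mul_div_add_le_g (orbit_nonneg h0 hrec _) (orbit_succ_le_pi_div_two h0 hrec i)

lemma orbit_le_six_pi_div (h0 : t 0 = π) (hrec : ∀ i, t (i + 1) = g (t i)) :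
    ∀ i : ℕ, t i ≤ 6 * π / (i + 1)
  | 0 => by simp [h0]; linarith [pi_pos]
  | 1 => by rw [hrec, h0, g_pi]; linarith [pi_pos]
  | i + 2 => by
    have ih := orbit_le_six_pi_div h0 hrec (i + 1)
    calc t (i + 2) ≤ 6 * π * t (i + 1) / (6 * π + t (i + 1)) := hrec (i + 1) ▸
          g_le_mul_div_add (orbit_nonneg h0 hrec _) (orbit_succ_le_pi_div_two h0 hrec i)
      _ ≤ 6 * π * (6 * π / ((i + 1 : ℕ) + 1)) / (6 * π + 6 * π / ((i + 1 : ℕ) + 1)) :=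
          mul_div_add_le_mul_div_add (by positivity) (orbit_nonneg h0 hrec _) ih
      _ = 6 * π / ((i + 2 : ℕ) + 1 : ℝ) := by
          rw [mul_div_div_add_div_eq _ _ (by positivity) (by positivity)]; push_cast; ring_nf

lemma orbit_sub_sin_div_pi_le (h0 : t 0 = π) (hrec : ∀ i, t (i + 1) = g (t i)) (i : ℕ) :
    (t i - sin (t i)) / π ≤ 36 * π ^ 2 / (i + 1) ^ 3 := by
  have ht := orbit_nonneg h0 hrec i
  calc (t i - sin (t i)) / π ≤ t i ^ 3 / 6 / π := by
        gcongr; linarith [sin_ge_sub_cube ht]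
    _ ≤ (6 * π / (i + 1)) ^ 3 / 6 / π := by gcongr; exact orbit_le_six_pi_div h0 hrec i
    _ = 36 * π ^ 2 / (i + 1) ^ 3 := by field_simp; ring

lemma one_sub_rho_nonneg (h0 : t 0 = π) (hrec : ∀ i, t (i + 1) = g (t i)) {d : ℕ}
    (hd : 1 ≤ d) : 0 ≤ 1 - rho t d := by
  rw [one_sub_rho_eq h0 hd]
  refine sum_nonneg fun i _ => mul_nonneg ?_ ?_
  · exact div_nonneg (sub_nonneg.2 (sin_le (orbit_nonneg h0 hrec i))) pi_nonneg
  · exact prod_nonneg fun j _ => div_nonneg (sub_nonneg.2 (orbit_le_pi h0 hrec j)) pi_nonneg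

lemma one_sub_rho_le (h0 : t 0 = π) (hrec : ∀ i, t (i + 1) = g (t i)) {d : ℕ} (hd : 1 ≤ d) :
    1 - rho t d ≤ 72 * π ^ 2 / d := by
  have hterm (i : ℕ) (hi : i ∈ range d) :
      (t i - sin (t i)) / π * ∏ j ∈ Ico (i + 1) d, (π - t j) / π
        ≤ 36 * π ^ 2 / d * ((i + 1 : ℝ) ^ 2)⁻¹ :=
    calc _ ≤ 36 * π ^ 2 / (i + 1) ^ 3 * ((i + 1) / d) :=
          mul_le_mul (orbit_sub_sin_div_pi_le h0 hrec i)
            (prod_Ico_pi_sub_div_le (pi_div_le_orbit h0 hrec) (orbit_le_pi h0 hrec)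
              (mem_range.1 hi))
            (prod_nonneg fun j _ => div_nonneg (sub_nonneg.2 (orbit_le_pi h0 hrec j)) pi_nonneg)
            (by positivity)
      _ = 36 * π ^ 2 / d * ((i + 1 : ℝ) ^ 2)⁻¹ := by field_simp
  calc 1 - rho t d ≤ ∑ i ∈ range d, 36 * π ^ 2 / d * ((i + 1 : ℝ) ^ 2)⁻¹ := by
        rw [one_sub_rho_eq h0 hd]; exact sum_le_sum hterm
    _ ≤ 36 * π ^ 2 / d * 2 := by
        rw [← mul_sum]; gcongr; exact sum_range_inv_add_one_sq_le d
    _ = 72 * π ^ 2 / d := by ring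

end Orbit

theorem stmt10 (t : ℕ → ℝ) (h0 : t 0 = Real.pi) (hrec : ∀ i, t (i + 1) = g (t i)) :
    Filter.Tendsto
      (fun d : ℕ => ∑ i ∈ Finset.range d,
        (Real.sin (t i) / Real.pi) * ∏ j ∈ Finset.Ico (i + 1) d, (Real.pi - t j) / Real.pi)
      Filter.atTop (nhds 1) := by
  change Tendsto (rho t) atTop (𝓝 1)
  have hlow : Tendsto (fun d : ℕ => 1 - 72 * π ^ 2 / d) atTop (𝓝 1) := by
    simpa using (tendsto_const_nhds (x := (1 : ℝ))).sub
      (tendsto_const_div_atTop_nhds_zero_nat (72 * π ^ 2))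
  refine tendsto_of_tendsto_of_tendsto_of_le_of_le' hlow tendsto_const_nhds ?_ ?_ <;>
    filter_upwards [eventually_ge_atTop 1] with d hd
  · linarith [one_sub_rho_le h0 hrec hd]
  · linarith [one_sub_rho_nonneg h0 hrec hd]
end

section
/- Suppose W ∈ ℝ^{n×k} satisfies the Weight Distribution Condition with constant ε. Then for any nonzero x, y ∈ ℝ^k with angle θ = ∠(x,y), we have ‖W_{+,x} x − W_{+,y} y‖ ≤ (√(1/2 + ε) + √(2(2ε + θ))) ‖x − y‖. -/
open Matrix

noncomputable section

/-- Euclidean norm on `Fin k → ℝ`. -/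
def vnorm {k : ℕ} (x : Fin k → ℝ) : ℝ := Real.sqrt (∑ i, x i ^ 2)

/-- Angle between two vectors of `Fin k → ℝ` (with Euclidean inner product). -/
def ang {k : ℕ} (x y : Fin k → ℝ) : ℝ := Real.arccos ((x ⬝ᵥ y) / (vnorm x * vnorm y))

/-- ℓ²→ℓ² operator (spectral) norm of a matrix. -/
def opNorm {m k : ℕ} (M : Matrix (Fin m) (Fin k) ℝ) : ℝ :=
  ‖LinearMap.toContinuousLinearMap (Matrix.toEuclideanLin M)‖

/-- `W_{+,x} = diag(Wx > 0) W`: keeps only rows of `W` with positive dot product with `x`. -/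
def Wplus {m k : ℕ} (W : Matrix (Fin m) (Fin k) ℝ) (x : Fin k → ℝ) :
    Matrix (Fin m) (Fin k) ℝ :=
  Matrix.of fun i j => if 0 < W i ⬝ᵥ x then W i j else 0

/-- The Weight Distribution Condition with constant ε. The matrix `M` is the (unique) symmetric
matrix sending `x̂ ↦ ŷ`, `ŷ ↦ x̂` and vanishing on `span{x,y}ᗮ`. -/
def WDC {m k : ℕ} (W : Matrix (Fin m) (Fin k) ℝ) (ε : ℝ) : Prop :=
  ∀ x y : Fin k → ℝ, x ≠ 0 → y ≠ 0 →
    ∃ M : Matrix (Fin k) (Fin k) ℝ, M.IsSymm ∧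
      M.mulVec ((vnorm x)⁻¹ • x) = (vnorm y)⁻¹ • y ∧
      M.mulVec ((vnorm y)⁻¹ • y) = (vnorm x)⁻¹ • x ∧
      (∀ z : Fin k → ℝ, x ⬝ᵥ z = 0 → y ⬝ᵥ z = 0 → M.mulVec z = 0) ∧
      opNorm ((∑ i : Fin m,
          if 0 < W i ⬝ᵥ x ∧ 0 < W i ⬝ᵥ y then vecMulVec (W i) (W i) else 0) -
        (((Real.pi - ang x y) / (2 * Real.pi)) • (1 : Matrix (Fin k) (Fin k) ℝ) +
          (Real.sin (ang x y) / (2 * Real.pi)) • M)) ≤ ε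


/-!
Split `W₊ₓ x - W₊ᵧ y = W₊ₓ (x - y) + (W₊ₓ - W₊ᵧ) y`. The WDC at `(x, x)` gives
`‖W₊ₓ‖² ≤ 1/2 + ε`, which handles the first term. In the second term only the rows where exactly
one of `⟨wᵢ, x⟩`, `⟨wᵢ, y⟩` is positive survive, and on such a row `|⟨wᵢ, y⟩| ≤ |⟨wᵢ, x - y⟩|`.
Hence its squared norm is at most the quadratic form of `Σₓ + Σᵧ - 2 Σₓᵧ` at `x - y`, where
`Σₓᵧ = ∑ᵢ 1[⟨wᵢ,x⟩ > 0] 1[⟨wᵢ,y⟩ > 0] wᵢ wᵢᵗ`. The WDC puts `Σₓᵧ` within `ε` of `Q_{x,y}`, and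
`Q_{x,y}` is within `θ` of `I/2` because `‖M_{x̂↔ŷ}‖ ≤ 1`; so this form is at most
`(1/2 + ε) + (1/2 + ε) - 2 (1/2 - ε - θ) = 2 (2ε + θ)` times `‖x - y‖²`.
-/

section Euclidean

variable {k : ℕ}

lemma vnorm_eq_norm_toLp (v : Fin k → ℝ) : vnorm v = ‖WithLp.toLp 2 v‖ := by
  simp [vnorm, EuclideanSpace.norm_eq]

lemma dotProduct_eq_inner_toLp (u v : Fin k → ℝ) :
    u ⬝ᵥ v = inner ℝ (WithLp.toLp 2 u) (WithLp.toLp 2 v) := by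
  simp [EuclideanSpace.inner_toLp_toLp, dotProduct_comm]

lemma vnorm_sq_eq_dotProduct (v : Fin k → ℝ) : vnorm v ^ 2 = v ⬝ᵥ v := by
  rw [vnorm_eq_norm_toLp, dotProduct_eq_inner_toLp, real_inner_self_eq_norm_sq]

lemma vnorm_sq_eq_sum (v : Fin k → ℝ) : vnorm v ^ 2 = ∑ i, v i ^ 2 :=
  Real.sq_sqrt (by positivity)

lemma vnorm_nonneg (v : Fin k → ℝ) : 0 ≤ vnorm v := Real.sqrt_nonneg _

lemma vnorm_ne_zero {v : Fin k → ℝ} (hv : v ≠ 0) : vnorm v ≠ 0 := by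
  simpa [vnorm_eq_norm_toLp] using hv

lemma vnorm_add_le (u v : Fin k → ℝ) : vnorm (u + v) ≤ vnorm u + vnorm v := by
  simpa only [vnorm_eq_norm_toLp, WithLp.toLp_add] using norm_add_le _ _

lemma abs_dotProduct_le (u v : Fin k → ℝ) : |u ⬝ᵥ v| ≤ vnorm u * vnorm v := by
  simpa only [dotProduct_eq_inner_toLp, vnorm_eq_norm_toLp] using abs_real_inner_le_norm _ _

lemma dotProduct_self_inv_vnorm_smul {v : Fin k → ℝ} (hv : v ≠ 0) :
    (vnorm v)⁻¹ • v ⬝ᵥ (vnorm v)⁻¹ • v = 1 := by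
  rw [smul_dotProduct, dotProduct_smul, ← vnorm_sq_eq_dotProduct, smul_eq_mul, smul_eq_mul]
  field_simp [vnorm_ne_zero hv]

lemma vnorm_mulVec_le {m : ℕ} (A : Matrix (Fin m) (Fin k) ℝ) (v : Fin k → ℝ) :
    vnorm (A *ᵥ v) ≤ opNorm A * vnorm v := by
  simpa [vnorm_eq_norm_toLp, opNorm] using
    (LinearMap.toContinuousLinearMap (Matrix.toEuclideanLin A)).le_opNorm (WithLp.toLp 2 v)

lemma abs_dotProduct_mulVec_le (A : Matrix (Fin k) (Fin k) ℝ) (v : Fin k → ℝ) :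
    |v ⬝ᵥ A *ᵥ v| ≤ opNorm A * vnorm v ^ 2 :=
  calc |v ⬝ᵥ A *ᵥ v| ≤ vnorm v * vnorm (A *ᵥ v) := abs_dotProduct_le _ _
    _ ≤ vnorm v * (opNorm A * vnorm v) := by gcongr; exacts [vnorm_nonneg _, vnorm_mulVec_le A v]
    _ = opNorm A * vnorm v ^ 2 := by ring

lemma exists_eq_smul_add_smul_add_orthogonal (u v z : Fin k → ℝ) :
    ∃ a b : ℝ, ∃ w : Fin k → ℝ, u ⬝ᵥ w = 0 ∧ v ⬝ᵥ w = 0 ∧ z = a • u + b • v + w := by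
  let K := Submodule.span ℝ {WithLp.toLp 2 u, WithLp.toLp 2 v}
  obtain ⟨p, hp, w, hw, hz⟩ := K.exists_add_mem_mem_orthogonal (WithLp.toLp 2 z)
  obtain ⟨a, b, rfl⟩ := Submodule.mem_span_pair.mp hp
  have hperp (t) (ht : t = u ∨ t = v) : t ⬝ᵥ WithLp.ofLp w = 0 := by
    rw [dotProduct_eq_inner_toLp, WithLp.toLp_ofLp]
    exact (K.mem_orthogonal _).mp hw _ (Submodule.subset_span (by rcases ht with rfl | rfl <;> simp))
  refine ⟨a, b, WithLp.ofLp w, hperp u (.inl rfl), hperp v (.inr rfl), ?_⟩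
  simpa using congrArg WithLp.ofLp hz

lemma vnorm_mulVec_le_of_swap {M : Matrix (Fin k) (Fin k) ℝ} {u v : Fin k → ℝ}
    (huv : u ⬝ᵥ u = v ⬝ᵥ v) (hMu : M *ᵥ u = v) (hMv : M *ᵥ v = u)
    (hM : ∀ z, u ⬝ᵥ z = 0 → v ⬝ᵥ z = 0 → M *ᵥ z = 0) (z : Fin k → ℝ) :
    vnorm (M *ᵥ z) ≤ vnorm z := by
  obtain ⟨a, b, w, huw, hvw, rfl⟩ := exists_eq_smul_add_smul_add_orthogonal u v z
  have hMz : M *ᵥ (a • u + b • v + w) = a • v + b • u := by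
    simp only [mulVec_add, mulVec_smul, hMu, hMv, hM w huw hvw, add_zero]
  have hw : 0 ≤ w ⬝ᵥ w := vnorm_sq_eq_dotProduct w ▸ sq_nonneg _
  rw [← pow_le_pow_iff_left₀ (vnorm_nonneg _) (vnorm_nonneg _) two_ne_zero,
    vnorm_sq_eq_dotProduct, vnorm_sq_eq_dotProduct, hMz]
  simp only [add_dotProduct, dotProduct_add, smul_dotProduct, dotProduct_smul, smul_eq_mul,
    dotProduct_comm w, huw, hvw, dotProduct_comm v u]
  rw [huv]
  linear_combination hw

lemma ang_nonneg (x y : Fin k → ℝ) : 0 ≤ ang x y := Real.arccos_nonneg _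

lemma ang_le_pi (x y : Fin k → ℝ) : ang x y ≤ Real.pi := Real.arccos_le_pi _

lemma ang_self {v : Fin k → ℝ} (hv : v ≠ 0) : ang v v = 0 := by
  rw [ang, ← vnorm_sq_eq_dotProduct, sq,
    div_self (mul_ne_zero (vnorm_ne_zero hv) (vnorm_ne_zero hv)), Real.arccos_one]

end Euclidean

lemma dotProduct_sum_ite_vecMulVec_mulVec {ι n R : Type*} [Fintype ι] [Fintype n]
    [CommSemiring R] (W : Matrix ι n R) (P : ι → Prop) [DecidablePred P] (v : n → R) :
    v ⬝ᵥ (∑ i, if P i then vecMulVec (W i) (W i) else 0) *ᵥ v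
      = ∑ i, if P i then (W i ⬝ᵥ v) ^ 2 else 0 := by
  simp only [Matrix.sum_mulVec, dotProduct_sum]
  refine Finset.sum_congr rfl fun i _ => ?_
  split_ifs
  · rw [vecMulVec_mulVec, dotProduct_smul, op_smul_eq_smul, smul_eq_mul, dotProduct_comm v, sq]
  · simp

lemma abs_quadForm_Q_sub_half_le {θ s t : ℝ} (hθ : 0 ≤ θ) (hθπ : θ ≤ Real.pi) (ht : |t| ≤ s) :
    |(Real.pi - θ) / (2 * Real.pi) * s + Real.sin θ / (2 * Real.pi) * t - s / 2| ≤ θ * s := by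
  have hπ : 1 < Real.pi := by linarith [Real.pi_gt_three]
  have hsin : 0 ≤ Real.sin θ := Real.sin_nonneg_of_nonneg_of_le_pi hθ hθπ
  have hsinθ : Real.sin θ ≤ θ := Real.sin_le hθ
  have hs : 0 ≤ s := (abs_nonneg t).trans ht
  have key : (Real.pi - θ) / (2 * Real.pi) * s + Real.sin θ / (2 * Real.pi) * t - s / 2
      = (Real.sin θ * t - θ * s) / (2 * Real.pi) := by
    field_simp
    ring
  have h2π : (0 : ℝ) < 2 * Real.pi := by positivity
  rw [key, abs_div, abs_of_pos h2π, div_le_iff₀ h2π]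
  calc |Real.sin θ * t - θ * s| ≤ Real.sin θ * |t| + θ * s := by
        simpa [abs_mul, abs_of_nonneg hsin, abs_of_nonneg (mul_nonneg hθ hs)] using
          abs_sub (Real.sin θ * t) (θ * s)
    _ ≤ θ * s + θ * s := by gcongr
    _ ≤ θ * s * (2 * Real.pi) := by nlinarith [mul_nonneg hθ hs]

lemma le_sqrt_mul_of_sq_le {a b c : ℝ} (ha : 0 ≤ a) (hb : 0 ≤ b) (h : a ^ 2 ≤ c * b ^ 2) :
    a ≤ Real.sqrt c * b := by
  rw [← Real.sqrt_sq ha, ← Real.sqrt_sq hb, ← Real.sqrt_mul' _ (sq_nonneg b)]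
  exact Real.sqrt_le_sqrt h

lemma sq_ite_sub_ite_le (a b : ℝ) :
    ((if 0 < a then b else 0) - (if 0 < b then b else 0)) ^ 2
      ≤ (if 0 < a then (a - b) ^ 2 else 0) + (if 0 < b then (a - b) ^ 2 else 0)
        - 2 * (if 0 < a ∧ 0 < b then (a - b) ^ 2 else 0) := by
  by_cases ha : 0 < a <;> by_cases hb : 0 < b <;>
    simp only [ha, hb, if_true, if_false, and_self, and_false, false_and] <;> nlinarith

section ReLU

variable {m k : ℕ} (W : Matrix (Fin m) (Fin k) ℝ)

lemma Wplus_mulVec_apply (x v : Fin k → ℝ) (i : Fin m) :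
    (Wplus W x *ᵥ v) i = if 0 < W i ⬝ᵥ x then W i ⬝ᵥ v else 0 := by
  by_cases h : 0 < W i ⬝ᵥ x
  · simp only [mulVec, Wplus, of_apply, h, if_true]
  · simp only [mulVec, Wplus, of_apply, h, if_false]
    exact zero_dotProduct v

lemma vnorm_Wplus_mulVec_sq (x v : Fin k → ℝ) :
    vnorm (Wplus W x *ᵥ v) ^ 2 = ∑ i, if 0 < W i ⬝ᵥ x then (W i ⬝ᵥ v) ^ 2 else 0 := by
  simp only [vnorm_sq_eq_sum, Wplus_mulVec_apply, ite_pow, zero_pow two_ne_zero]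

lemma vnorm_Wplus_sub_Wplus_mulVec_sq_le (x y : Fin k → ℝ) :
    vnorm ((Wplus W x - Wplus W y) *ᵥ y) ^ 2
      ≤ (∑ i, if 0 < W i ⬝ᵥ x then (W i ⬝ᵥ (x - y)) ^ 2 else 0)
        + (∑ i, if 0 < W i ⬝ᵥ y then (W i ⬝ᵥ (x - y)) ^ 2 else 0)
        - 2 * ∑ i, if 0 < W i ⬝ᵥ x ∧ 0 < W i ⬝ᵥ y then (W i ⬝ᵥ (x - y)) ^ 2 else 0 := by
  rw [vnorm_sq_eq_sum, Finset.mul_sum, ← Finset.sum_add_distrib, ← Finset.sum_sub_distrib]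
  refine Finset.sum_le_sum fun i _ => ?_
  simpa only [sub_mulVec, Pi.sub_apply, Wplus_mulVec_apply, dotProduct_sub] using
    sq_ite_sub_ite_le (W i ⬝ᵥ x) (W i ⬝ᵥ y)

variable {W} {ε : ℝ}

theorem WDC.abs_sum_sq_sub_half_le (hW : WDC W ε) {x y : Fin k → ℝ} (hx : x ≠ 0) (hy : y ≠ 0)
    (v : Fin k → ℝ) :
    |(∑ i, if 0 < W i ⬝ᵥ x ∧ 0 < W i ⬝ᵥ y then (W i ⬝ᵥ v) ^ 2 else 0) - vnorm v ^ 2 / 2|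
      ≤ (ε + ang x y) * vnorm v ^ 2 := by
  obtain ⟨M, -, hMx, hMy, hM, hop⟩ := hW x y hx hy
  have hMv : |v ⬝ᵥ M *ᵥ v| ≤ vnorm v ^ 2 := by
    have hperp (u z : Fin k → ℝ) (hu : u ≠ 0) (h : (vnorm u)⁻¹ • u ⬝ᵥ z = 0) : u ⬝ᵥ z = 0 := by
      simpa [smul_dotProduct, vnorm_ne_zero hu] using h
    calc |v ⬝ᵥ M *ᵥ v| ≤ vnorm v * vnorm (M *ᵥ v) := abs_dotProduct_le _ _
      _ ≤ vnorm v * vnorm v := by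
        gcongr
        · exact vnorm_nonneg v
        refine vnorm_mulVec_le_of_swap ?_ hMx hMy
          (fun z hxz hyz => hM z (hperp x z hx hxz) (hperp y z hy hyz)) v
        rw [dotProduct_self_inv_vnorm_smul hx, dotProduct_self_inv_vnorm_smul hy]
      _ = vnorm v ^ 2 := (sq _).symm
  have hWDC := (abs_dotProduct_mulVec_le _ v).trans
    (mul_le_mul_of_nonneg_right hop (sq_nonneg (vnorm v)))
  simp only [sub_mulVec, add_mulVec, smul_mulVec, one_mulVec, dotProduct_sub, dotProduct_add,
    dotProduct_smul, smul_eq_mul, ← vnorm_sq_eq_dotProduct] at hWDC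
  rw [dotProduct_sum_ite_vecMulVec_mulVec] at hWDC
  have hQ := abs_quadForm_Q_sub_half_le (ang_nonneg x y) (ang_le_pi x y) hMv
  calc _ ≤ _ := abs_sub_le _ _ _
    _ ≤ ε * vnorm v ^ 2 + ang x y * vnorm v ^ 2 := add_le_add hWDC hQ
    _ = (ε + ang x y) * vnorm v ^ 2 := by ring

theorem WDC.sum_sq_le (hW : WDC W ε) {x : Fin k → ℝ} (hx : x ≠ 0) (v : Fin k → ℝ) :
    (∑ i, if 0 < W i ⬝ᵥ x then (W i ⬝ᵥ v) ^ 2 else 0) ≤ (1 / 2 + ε) * vnorm v ^ 2 := by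
  have h := hW.abs_sum_sq_sub_half_le hx hx v
  simp only [and_self, ang_self hx, add_zero] at h
  linarith [(abs_le.mp h).2]

theorem WDC.vnorm_Wplus_mulVec_le (hW : WDC W ε) {x : Fin k → ℝ} (hx : x ≠ 0)
    (v : Fin k → ℝ) :
    vnorm (Wplus W x *ᵥ v) ≤ Real.sqrt (1 / 2 + ε) * vnorm v :=
  le_sqrt_mul_of_sq_le (vnorm_nonneg _) (vnorm_nonneg _)
    ((vnorm_Wplus_mulVec_sq W x v).trans_le (hW.sum_sq_le hx v))

theorem WDC.vnorm_Wplus_sub_Wplus_mulVec_le (hW : WDC W ε) {x y : Fin k → ℝ} (hx : x ≠ 0)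
    (hy : y ≠ 0) :
    vnorm ((Wplus W x - Wplus W y) *ᵥ y)
      ≤ Real.sqrt (2 * (2 * ε + ang x y)) * vnorm (x - y) := by
  refine le_sqrt_mul_of_sq_le (vnorm_nonneg _) (vnorm_nonneg _) ?_
  have hxy := (abs_le.mp (hW.abs_sum_sq_sub_half_le hx hy (x - y))).1
  linarith [vnorm_Wplus_sub_Wplus_mulVec_sq_le W x y, hW.sum_sq_le hx (x - y),
    hW.sum_sq_le hy (x - y)]

end ReLU

theorem stmt13 {m k : ℕ} (W : Matrix (Fin m) (Fin k) ℝ) (ε : ℝ) (hW : WDC W ε)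
    (x y : Fin k → ℝ) (hx : x ≠ 0) (hy : y ≠ 0) :
    vnorm ((Wplus W x).mulVec x - (Wplus W y).mulVec y) ≤
      (Real.sqrt (1 / 2 + ε) + Real.sqrt (2 * (2 * ε + ang x y))) * vnorm (x - y) := by
  have hsplit : (Wplus W x).mulVec x - (Wplus W y).mulVec y
      = Wplus W x *ᵥ (x - y) + (Wplus W x - Wplus W y) *ᵥ y := by
    rw [mulVec_sub, sub_mulVec]
    abel
  rw [hsplit, add_mul]
  exact (vnorm_add_le _ _).trans
    (add_le_add (hW.vnorm_Wplus_mulVec_le hx _) (hW.vnorm_Wplus_sub_Wplus_mulVec_le hx hy))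

end
end

section
/- For any nonzero vectors x, y in ℝ^k with angle θ_{x,y} = ∠(x,y): ‖x − y‖ ≥ 2 sin(θ_{x,y}/2) · min(‖x‖, ‖y‖), and consequently (using sin(θ/2) ≥ θ/4 for θ ∈ [0,π]), ‖x/‖x‖ − y/‖y‖‖ ≤ θ_{x,y} ≤ 2 max(1/‖x‖, 1/‖y‖) ‖x − y‖. -/
/-!
Write `θ = ∠(x, y)`. Since `1 - cos θ = 2 sin² (θ / 2)`, the law of cosines reads
`‖x - y‖² = (‖x‖ - ‖y‖)² + (2 sin (θ / 2))² ‖x‖ ‖y‖`, which gives the lower bound on `‖x - y‖`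
and, for unit vectors, the chord formula `‖x̂ - ŷ‖ = 2 sin (θ / 2)`. The two bounds on `θ` then
follow from `θ / 4 ≤ sin (θ / 2) ≤ θ / 2` on `[0, π]`.
-/

open Real NormedSpace

theorem Real.div_four_le_sin_half {θ : ℝ} (h₀ : 0 ≤ θ) (hπ : θ ≤ π) : θ / 4 ≤ sin (θ / 2) :=
  calc θ / 4 ≤ 2 / π * (θ / 2) := by
        rw [div_mul_div_comm, div_le_div_iff₀ (by norm_num) (by positivity)]
        nlinarith [pi_le_four]
    _ ≤ sin (θ / 2) := mul_le_sin (by linarith) (by linarith)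

namespace InnerProductGeometry

variable {V : Type*} [NormedAddCommGroup V] [InnerProductSpace ℝ V]

theorem sin_half_angle_nonneg (x y : V) : 0 ≤ sin (angle x y / 2) :=
  sin_nonneg_of_nonneg_of_le_pi (by linarith [angle_nonneg x y])
    (by linarith [angle_le_pi x y, pi_pos])

theorem norm_sub_sq_eq_sq_sub_add_two_sin_half_angle_sq_mul (x y : V) :
    ‖x - y‖ ^ 2 = (‖x‖ - ‖y‖) ^ 2 + (2 * sin (angle x y / 2)) ^ 2 * (‖x‖ * ‖y‖) := by
  have hcos : cos (angle x y) = 1 - 2 * sin (angle x y / 2) ^ 2 := by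
    have h := cos_two_mul' (angle x y / 2)
    rw [mul_div_cancel₀ _ two_ne_zero] at h
    linarith [sin_sq_add_cos_sq (angle x y / 2)]
  have := norm_sub_sq_eq_norm_sq_add_norm_sq_sub_two_mul_norm_mul_norm_mul_cos_angle x y
  rw [hcos] at this
  linear_combination this

theorem two_sin_half_angle_mul_min_le_norm_sub (x y : V) :
    2 * sin (angle x y / 2) * min ‖x‖ ‖y‖ ≤ ‖x - y‖ := by
  have hs := sin_half_angle_nonneg x y
  have hmin : min ‖x‖ ‖y‖ ^ 2 ≤ ‖x‖ * ‖y‖ := by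
    rw [sq]
    exact mul_le_mul (min_le_left _ _) (min_le_right _ _) (by positivity) (norm_nonneg _)
  rw [← pow_le_pow_iff_left₀ (by positivity) (norm_nonneg _) two_ne_zero,
    norm_sub_sq_eq_sq_sub_add_two_sin_half_angle_sq_mul, mul_pow]
  linarith [sq_nonneg (‖x‖ - ‖y‖),
    mul_le_mul_of_nonneg_left hmin (sq_nonneg (2 * sin (angle x y / 2)))]

theorem norm_sub_eq_two_sin_half_angle {x y : V} (hx : ‖x‖ = 1) (hy : ‖y‖ = 1) :
    ‖x - y‖ = 2 * sin (angle x y / 2) := by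
  have h := norm_sub_sq_eq_sq_sub_add_two_sin_half_angle_sq_mul x y
  rw [hx, hy] at h
  have := sin_half_angle_nonneg x y
  nlinarith [norm_nonneg (x - y)]

theorem norm_normalize_sub_normalize_le_angle {x y : V} (hx : x ≠ 0) (hy : y ≠ 0) :
    ‖normalize x - normalize y‖ ≤ angle x y := by
  rw [norm_sub_eq_two_sin_half_angle (norm_normalize_eq_one_iff.2 hx)
    (norm_normalize_eq_one_iff.2 hy), angle_normalize_left, angle_normalize_right]
  linarith [sin_le (by linarith [angle_nonneg x y] : 0 ≤ angle x y / 2)]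

theorem angle_le_two_mul_max_inv_norm_mul_norm_sub {x y : V} (hx : x ≠ 0) (hy : y ≠ 0) :
    angle x y ≤ 2 * max (1 / ‖x‖) (1 / ‖y‖) * ‖x - y‖ := by
  have hmin : 0 < min ‖x‖ ‖y‖ := lt_min (norm_pos_iff.2 hx) (norm_pos_iff.2 hy)
  have hmax : 1 / min ‖x‖ ‖y‖ ≤ max (1 / ‖x‖) (1 / ‖y‖) := by
    rcases min_choice ‖x‖ ‖y‖ with h | h <;> rw [h]
    exacts [le_max_left _ _, le_max_right _ _]
  have hθ : angle x y * min ‖x‖ ‖y‖ ≤ 2 * ‖x - y‖ := by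
    nlinarith [div_four_le_sin_half (angle_nonneg x y) (angle_le_pi x y),
      two_sin_half_angle_mul_min_le_norm_sub x y]
  calc angle x y ≤ 2 * (1 / min ‖x‖ ‖y‖) * ‖x - y‖ := by
        rw [mul_one_div, div_mul_eq_mul_div, le_div_iff₀ hmin]; exact hθ
    _ ≤ 2 * max (1 / ‖x‖) (1 / ‖y‖) * ‖x - y‖ := by gcongr

end InnerProductGeometry

open InnerProductGeometry in
theorem stmt16 (k : ℕ) (x y : EuclideanSpace ℝ (Fin k)) (hx : x ≠ 0) (hy : y ≠ 0) :
    2 * Real.sin (InnerProductGeometry.angle x y / 2) * min ‖x‖ ‖y‖ ≤ ‖x - y‖ ∧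
    ‖(‖x‖⁻¹ • x) - (‖y‖⁻¹ • y)‖ ≤ InnerProductGeometry.angle x y ∧
    InnerProductGeometry.angle x y ≤ 2 * max (1 / ‖x‖) (1 / ‖y‖) * ‖x - y‖ :=
  ⟨two_sin_half_angle_mul_min_le_norm_sub x y, norm_normalize_sub_normalize_le_angle hx hy,
    angle_le_two_mul_max_inv_norm_mul_norm_sub hx hy⟩
end
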